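/- Suppose 1 < p < ∞ and ‖θ‖_{p,*} ≤ α₁ + α₂. Then sup over x ∈ ℝⁿ of (f(⟨θ, x⟩) − α₁‖x₁ − x‖_p − α₂‖x₂ − x‖_p) ≤ f((min(α₁,α₂)·‖θ‖_{p,*}·‖x₁−x₂‖_p + ⟨θ, α₁x₁ + α₂x₂⟩)/(α₁+α₂)) − min(α₁,α₂)·‖x₁−x₂‖_p, where f(t) = log(1+exp(t)). -/

import Mathlib

/-!
Put `t = α₁ ‖x₁ - x‖_p + α₂ ‖x₂ - x‖_p`. Hölder's inequality gives
`(α₁ + α₂) ⟨θ, x⟩ ≤ ‖θ‖_{p,*} t + ⟨θ, α₁ x₁ + α₂ x₂⟩`, and the triangle inequality gives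
`min α₁ α₂ ‖x₁ - x₂‖_p ≤ t`. Since `f` is monotone and `f t - t = f (-t)`, for a slope
`0 ≤ k ≤ 1` the map `τ ↦ f (k τ + c) - τ` is antitone; with `k = ‖θ‖_{p,*} / (α₁ + α₂)` its value
at `t` bounds the left-hand side and its value at `min α₁ α₂ ‖x₁ - x₂‖_p` is the right-hand side.
-/

noncomputable def pnorm {n : ℕ} (p : ℝ) (v : Fin n → ℝ) : ℝ :=
  (∑ i, |v i| ^ p) ^ (1 / p)

def dot {n : ℕ} (v w : Fin n → ℝ) : ℝ := ∑ i, v i * w i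

open Real

section Pnorm

variable {n : ℕ}

lemma pnorm_nonneg (p : ℝ) (v : Fin n → ℝ) : 0 ≤ pnorm p v :=
  rpow_nonneg (Finset.sum_nonneg fun _ _ => rpow_nonneg (abs_nonneg _) _) _

lemma pnorm_sub_comm (p : ℝ) (u v : Fin n → ℝ) : pnorm p (u - v) = pnorm p (v - u) := by
  simp only [pnorm, Pi.sub_apply, abs_sub_comm]

lemma pnorm_add_le {p : ℝ} (hp : 1 ≤ p) (u v : Fin n → ℝ) :
    pnorm p (u + v) ≤ pnorm p u + pnorm p v := by
  simpa [pnorm] using Real.Lp_add_le Finset.univ u v hp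

lemma pnorm_sub_le_add {p : ℝ} (hp : 1 ≤ p) (u v w : Fin n → ℝ) :
    pnorm p (u - w) ≤ pnorm p (u - v) + pnorm p (v - w) := by
  simpa using pnorm_add_le hp (u - v) (v - w)

lemma dot_eq_dotProduct (v w : Fin n → ℝ) : dot v w = v ⬝ᵥ w := rfl

lemma dot_le_pnorm_mul_pnorm {p r : ℝ} (hrp : r.HolderConjugate p) (u v : Fin n → ℝ) :
    dot u v ≤ pnorm r u * pnorm p v :=
  Real.inner_le_Lp_mul_Lq Finset.univ u v hrp

lemma mul_dot_le_pnorm_mul_weighted_dist {p r : ℝ} (hrp : r.HolderConjugate p) {α₁ α₂ : ℝ}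
    (hα₁ : 0 ≤ α₁) (hα₂ : 0 ≤ α₂) (θ x₁ x₂ x : Fin n → ℝ) :
    (α₁ + α₂) * dot θ x ≤
      pnorm r θ * (α₁ * pnorm p (x₁ - x) + α₂ * pnorm p (x₂ - x)) + dot θ (α₁ • x₁ + α₂ • x₂) := by
  have hsplit : (α₁ + α₂) * dot θ x =
      α₁ * dot θ (x - x₁) + α₂ * dot θ (x - x₂) + dot θ (α₁ • x₁ + α₂ • x₂) := by
    simp only [dot_eq_dotProduct, dotProduct_sub, dotProduct_add, dotProduct_smul, smul_eq_mul]
    ring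
  have h₁ := dot_le_pnorm_mul_pnorm hrp θ (x - x₁)
  have h₂ := dot_le_pnorm_mul_pnorm hrp θ (x - x₂)
  rw [pnorm_sub_comm] at h₁ h₂
  rw [hsplit]
  nlinarith [mul_le_mul_of_nonneg_left h₁ hα₁, mul_le_mul_of_nonneg_left h₂ hα₂]

lemma min_mul_pnorm_sub_le {p : ℝ} (hp : 1 ≤ p) {α₁ α₂ : ℝ} (hα₁ : 0 ≤ α₁) (hα₂ : 0 ≤ α₂)
    (x₁ x₂ x : Fin n → ℝ) :
    min α₁ α₂ * pnorm p (x₁ - x₂) ≤ α₁ * pnorm p (x₁ - x) + α₂ * pnorm p (x₂ - x) := by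
  have htri := pnorm_sub_le_add hp x₁ x x₂
  rw [pnorm_sub_comm p x] at htri
  calc min α₁ α₂ * pnorm p (x₁ - x₂)
      ≤ min α₁ α₂ * pnorm p (x₁ - x) + min α₁ α₂ * pnorm p (x₂ - x) := by
        rw [← mul_add]
        exact mul_le_mul_of_nonneg_left htri (le_min hα₁ hα₂)
    _ ≤ α₁ * pnorm p (x₁ - x) + α₂ * pnorm p (x₂ - x) := by
        gcongr
        exacts [pnorm_nonneg p _, min_le_left α₁ α₂, pnorm_nonneg p _, min_le_right α₁ α₂]

end Pnorm

section Softplus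

lemma monotone_log_one_add_exp : Monotone fun t : ℝ => log (1 + exp t) := fun a b hab =>
  log_le_log (by positivity) (by gcongr)

lemma log_one_add_exp_sub_self (t : ℝ) : log (1 + exp t) - t = log (1 + exp (-t)) := by
  have h : 1 + exp t = exp t * (1 + exp (-t)) := by
    rw [mul_add, mul_one, ← exp_add, add_neg_cancel, exp_zero, add_comm]
  rw [h, log_mul (exp_ne_zero _) (by positivity), log_exp]
  ring

lemma antitone_log_one_add_exp_sub_self : Antitone fun t : ℝ => log (1 + exp t) - t := by
  intro a b hab
  simp only [log_one_add_exp_sub_self]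
  exact monotone_log_one_add_exp (neg_le_neg hab)

lemma antitone_log_one_add_exp_mul_add_sub {k : ℝ} (hk₀ : 0 ≤ k) (hk₁ : k ≤ 1) (c : ℝ) :
    Antitone fun τ : ℝ => log (1 + exp (k * τ + c)) - τ := by
  intro τ₁ τ₂ hτ
  have hslope : k * (τ₂ - τ₁) ≤ τ₂ - τ₁ := mul_le_of_le_one_left (sub_nonneg.2 hτ) hk₁
  have h := antitone_log_one_add_exp_sub_self
    (show k * τ₁ + c ≤ k * τ₂ + c by gcongr)
  simp only at h ⊢
  linarith

end Softplus

theorem stmt_14 (n : ℕ) (p r α₁ α₂ : ℝ) (hp : 1 < p) (hpr : 1 / p + 1 / r = 1)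
    (hα₁ : 0 < α₁) (hα₂ : 0 < α₂)
    (x₁ x₂ θ : Fin n → ℝ) (hθ : pnorm r θ ≤ α₁ + α₂) :
    ∀ x : Fin n → ℝ,
      Real.log (1 + Real.exp (dot θ x)) - α₁ * pnorm p (x₁ - x) - α₂ * pnorm p (x₂ - x) ≤
        Real.log (1 + Real.exp
            ((min α₁ α₂ * pnorm r θ * pnorm p (x₁ - x₂) + dot θ (α₁ • x₁ + α₂ • x₂)) /
              (α₁ + α₂))) -
          min α₁ α₂ * pnorm p (x₁ - x₂) := by
  intro x
  have hrp : r.HolderConjugate p :=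
    (holderConjugate_iff.2 ⟨hp, by simpa only [one_div] using hpr⟩).symm
  have hA : 0 < α₁ + α₂ := add_pos hα₁ hα₂
  set s := pnorm r θ
  set c := dot θ (α₁ • x₁ + α₂ • x₂)
  set t := α₁ * pnorm p (x₁ - x) + α₂ * pnorm p (x₂ - x)
  set g : ℝ → ℝ := fun τ => log (1 + exp (s / (α₁ + α₂) * τ + c / (α₁ + α₂))) - τ
  have hdot : dot θ x ≤ s / (α₁ + α₂) * t + c / (α₁ + α₂) := by
    rw [show s / (α₁ + α₂) * t + c / (α₁ + α₂) = (s * t + c) / (α₁ + α₂) by ring,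
      le_div_iff₀ hA, mul_comm]
    exact mul_dot_le_pnorm_mul_weighted_dist hrp hα₁.le hα₂.le θ x₁ x₂ x
  have hmin : min α₁ α₂ * pnorm p (x₁ - x₂) ≤ t :=
    min_mul_pnorm_sub_le hp.le hα₁.le hα₂.le x₁ x₂ x
  have hg : Antitone g := antitone_log_one_add_exp_mul_add_sub
    (div_nonneg (pnorm_nonneg r θ) hA.le) ((div_le_one hA).2 hθ) _
  calc log (1 + exp (dot θ x)) - α₁ * pnorm p (x₁ - x) - α₂ * pnorm p (x₂ - x)
      ≤ g t := by
        have := monotone_log_one_add_exp hdot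
        simp only [g, t] at this ⊢
        linarith
    _ ≤ g (min α₁ α₂ * pnorm p (x₁ - x₂)) := hg hmin
    _ = _ := by
        simp only [g]
        rw [show s / (α₁ + α₂) * (min α₁ α₂ * pnorm p (x₁ - x₂)) + c / (α₁ + α₂) =
          (min α₁ α₂ * s * pnorm p (x₁ - x₂) + c) / (α₁ + α₂) by ring]
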